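/- For any WEF-able allocation A of m items, every directed path P in the weighted envy graph has cost at most mV/w_1, where V is the maximum single-item value over agents and items, w_1 = min_i w_i, and hence the total minimal subsidy Σ_i w_i ℓ_i(A) is at most (W/w_1 − 1)·m·V, where W = Σ_i w_i. -/

import Mathlib

/-- Sum of edge costs along the consecutive pairs of a list (a directed path). -/
noncomputable def pathCost {n : ℕ} (c : Fin n → Fin n → ℝ) (p : List (Fin n)) : ℝ :=
  ((p.zip p.tail).map fun q => c q.1 q.2).sum

/-- Sum of edge costs along a cycle `i₁,…,i_r,i₁`. -/
noncomputable def cycleCost {n : ℕ} (c : Fin n → Fin n → ℝ) (p : List (Fin n)) : ℝ :=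
  ((p.zip (p.rotate 1)).map fun q => c q.1 q.2).sum

/-- Weighted envy edge cost without subsidies. -/
noncomputable def envyCost {n : ℕ} (v : Fin n → Fin n → ℝ) (w : Fin n → ℝ) (i j : Fin n) : ℝ :=
  v i j / w j - v i i / w i

/-- Weighted envy edge cost with subsidy vector `s`. -/
noncomputable def envyCostS {n : ℕ} (v : Fin n → Fin n → ℝ) (w : Fin n → ℝ) (s : Fin n → ℝ)
    (i j : Fin n) : ℝ :=
  (v i j + s j) / w j - (v i i + s i) / w i

/-- `(A,s)` is weighted-envy-free. -/
def IsWEF {n : ℕ} (v : Fin n → Fin n → ℝ) (w : Fin n → ℝ) (s : Fin n → ℝ) : Prop :=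
  ∀ i j, (v i j + s j) / w j ≤ (v i i + s i) / w i

/-- The set of costs of (vertex-distinct) directed paths starting at `i`. -/
noncomputable def pathCostsFrom {n : ℕ} (c : Fin n → Fin n → ℝ) (i : Fin n) : Set ℝ :=
  {x | ∃ p : List (Fin n), p ≠ [] ∧ p.Nodup ∧ p.head? = some i ∧ pathCost c p = x}

/-!
The cost of an edge `i → j` is at most `v i j / w j ≤ |A j| V / w 0`, so along a simple path the
costs add up to at most `(∑ |A j|) V / w 0 ≤ m V / w 0`, the bundles being disjoint. Hence every
`ℓ i` lies in `[0, m V / w 0]`, the one-vertex path giving `0`. If every `ℓ i` were positive, every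
agent would start a walk of positive cost; chaining such walks among finitely many agents closes a
cycle of positive cost, which is excluded. So some `ℓ i₀` vanishes, and
`∑ w i * ℓ i ≤ (W - w i₀) m V / w 0 ≤ (W - w 0) m V / w 0`.
-/

open Function

theorem Finite.exists_rel_self_of_forall_exists {α : Type*} [Finite α] [Nonempty α]
    (r : α → α → Prop) [IsTrans α r] (hsucc : ∀ a, ∃ b, r a b) : ∃ a, r a a := by
  by_contra! hirr
  have : Std.Irrefl (flip r) := ⟨hirr⟩
  have : IsTrans α (flip r) := ⟨fun _ _ _ hab hbc => IsTrans.trans (r := r) _ _ _ hbc hab⟩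
  obtain ⟨a, -, hmin⟩ := (Finite.wellFounded_of_trans_of_irrefl (flip r)).has_min Set.univ
    ⟨Classical.arbitrary α, trivial⟩
  obtain ⟨b, hab⟩ := hsucc a
  exact hmin b trivial hab

theorem sum_sum_le_sum_of_pairwise_disjoint {ι α : Type*} [Fintype ι] [Fintype α]
    [DecidableEq α] {A : ι → Finset α} (hA : Pairwise (Disjoint on A))
    {g : α → ℝ} (hg : ∀ a, 0 ≤ g a) : ∑ i, ∑ a ∈ A i, g a ≤ ∑ a, g a := by
  rw [← Finset.sum_biUnion (hA.set_pairwise _)]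
  exact Finset.sum_le_univ_sum_of_nonneg hg

theorem sum_mul_le_sub_mul_of_nonpos {ι : Type*} [Fintype ι] [DecidableEq ι] {w ℓ : ι → ℝ}
    {B : ℝ} (hw : ∀ i, 0 ≤ w i) (hℓ : ∀ i, ℓ i ≤ B) {i₀ : ι} (hi₀ : ℓ i₀ ≤ 0) :
    ∑ i, w i * ℓ i ≤ (∑ i, w i - w i₀) * B := by
  rw [← Finset.add_sum_erase _ _ (Finset.mem_univ i₀),
    ← Finset.add_sum_erase Finset.univ w (Finset.mem_univ i₀), add_sub_cancel_left,
    Finset.sum_mul]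
  have hfirst : w i₀ * ℓ i₀ ≤ 0 := mul_nonpos_of_nonneg_of_nonpos (hw i₀) hi₀
  have hrest := Finset.sum_le_sum fun i (_ : i ∈ Finset.univ.erase i₀) =>
    mul_le_mul_of_nonneg_left (hℓ i) (hw i)
  linarith

section PathCost

variable {n : ℕ} (c : Fin n → Fin n → ℝ)

@[simp]
theorem pathCost_singleton (a : Fin n) : pathCost c [a] = 0 := by simp [pathCost]

@[simp]
theorem pathCost_cons_cons (a b : Fin n) (t : List (Fin n)) :
    pathCost c (a :: b :: t) = c a b + pathCost c (b :: t) := by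
  simp [pathCost]

theorem pathCost_append_cons (p : List (Fin n)) (x : Fin n) (q : List (Fin n)) :
    pathCost c (p ++ x :: q) = pathCost c (p ++ [x]) + pathCost c (x :: q) := by
  induction p with
  | nil => simp
  | cons a p ih =>
    cases p with
    | nil => simp
    | cons b t =>
      simp only [List.cons_append, pathCost_cons_cons] at ih ⊢
      rw [ih]; ring

theorem cycleCost_cons (a : Fin n) (t : List (Fin n)) :
    cycleCost c (a :: t) = pathCost c (a :: t ++ [a]) := by
  have hzip : (a :: (t ++ [a])).zip (t ++ [a]) = (a :: t).zip (t ++ [a]) := by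
    simpa using List.zip_append (l₁ := a :: t) (l₂ := t ++ [a]) (r₁ := [a])
      (r₂ := ([] : List (Fin n))) (by simp)
  simp only [cycleCost, pathCost, List.rotate_cons_succ, List.rotate_zero, List.cons_append,
    List.tail_cons, hzip]

theorem pathCost_le_sum_tail {f : Fin n → ℝ} (hc : ∀ i j, c i j ≤ f j) (p : List (Fin n)) :
    pathCost c p ≤ (p.tail.map f).sum := by
  induction p with
  | nil => simp [pathCost]
  | cons a p ih =>
    cases p with
    | nil => simp
    | cons b t =>
      rw [pathCost_cons_cons]
      simpa using add_le_add (hc a b) ih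

/-- Walks may repeat vertices, which makes `PositiveWalk c` transitive. -/
def PositiveWalk (a b : Fin n) : Prop :=
  ∃ t : List (Fin n), 0 < pathCost c (a :: t ++ [b])

instance : IsTrans (Fin n) (PositiveWalk c) where
  trans a b d := by
    rintro ⟨t, ht⟩ ⟨s, hs⟩
    refine ⟨t ++ b :: s, ?_⟩
    have := pathCost_append_cons c (a :: t) b (s ++ [d])
    simp only [List.cons_append, List.append_assoc] at this ht hs ⊢
    linarith

theorem positiveWalk_of_pos {p : List (Fin n)} {i : Fin n} (hi : p.head? = some i)
    (hpos : 0 < pathCost c p) : ∃ j, PositiveWalk c i j := by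
  obtain ⟨t, rfl⟩ := List.head?_eq_some_iff.mp hi
  rcases List.eq_nil_or_concat t with rfl | ⟨s, j, rfl⟩
  · simp at hpos
  · exact ⟨j, s, by simpa using hpos⟩

theorem exists_forall_pathCostsFrom_nonpos [NeZero n]
    (hcyc : ∀ p : List (Fin n), p ≠ [] → cycleCost c p ≤ 0) :
    ∃ i, ∀ x ∈ pathCostsFrom c i, x ≤ 0 := by
  by_contra! h
  have hsucc : ∀ i, ∃ j, PositiveWalk c i j := fun i => by
    obtain ⟨x, ⟨p, -, -, hi, rfl⟩, hpos⟩ := h i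
    exact positiveWalk_of_pos c hi hpos
  obtain ⟨a, t, hpos⟩ := Finite.exists_rel_self_of_forall_exists (PositiveWalk c) hsucc
  have := hcyc (a :: t) (List.cons_ne_nil a t)
  rw [cycleCost_cons] at this
  linarith

end PathCost

section EnvyGraph

variable {n m : ℕ} {w : Fin (n + 1) → ℝ} {v : Fin (n + 1) → Fin (n + 1) → ℝ}

theorem envyCost_le_div (hw0 : 0 < w 0) (hmono : Monotone w) {i j : Fin (n + 1)}
    (hij : 0 ≤ v i j) (hii : 0 ≤ v i i) : envyCost v w i j ≤ v i j / w 0 := by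
  have hj : v i j / w j ≤ v i j / w 0 := div_le_div_of_nonneg_left hij hw0 (hmono (Fin.zero_le j))
  have hi : 0 ≤ v i i / w i := div_nonneg hii (hw0.trans_le (hmono (Fin.zero_le i))).le
  rw [envyCost]
  linarith

theorem pathCost_envyCost_le (hw0 : 0 < w 0) (hmono : Monotone w) {val : Fin (n + 1) → Fin m → ℝ}
    (h0 : ∀ i o, 0 ≤ val i o) {V : ℝ} (hV : ∀ i o, val i o ≤ V) {A : Fin (n + 1) → Finset (Fin m)}
    (hdisj : Pairwise (Disjoint on A)) (hv : ∀ i j, v i j = ∑ o ∈ A j, val i o)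
    {p : List (Fin (n + 1))} (hp : p.Nodup) : pathCost (envyCost v w) p ≤ m * V / w 0 := by
  have hv_nonneg : ∀ i j, 0 ≤ v i j := fun i j => hv i j ▸ Finset.sum_nonneg fun o _ => h0 i o
  have hV_nonneg : ∀ o : Fin m, 0 ≤ V := fun o => (h0 0 o).trans (hV 0 o)
  set f : Fin (n + 1) → ℝ := fun j => (∑ _o ∈ A j, V) / w 0 with hf
  have hedge : ∀ i j, envyCost v w i j ≤ f j := fun i j =>
    (envyCost_le_div hw0 hmono (hv_nonneg i j) (hv_nonneg i i)).trans
      (div_le_div_of_nonneg_right (hv i j ▸ Finset.sum_le_sum fun o _ => hV i o) hw0.le)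
  calc pathCost (envyCost v w) p ≤ (p.tail.map f).sum := pathCost_le_sum_tail _ hedge p
    _ = ∑ j ∈ p.tail.toFinset, f j := (List.sum_toFinset f (hp.sublist p.tail_sublist)).symm
    _ ≤ ∑ j, f j := Finset.sum_le_univ_sum_of_nonneg fun j =>
        div_nonneg (Finset.sum_nonneg fun o _ => hV_nonneg o) hw0.le
    _ = (∑ j, ∑ _o ∈ A j, V) / w 0 := by rw [hf, Finset.sum_div]
    _ ≤ (∑ _o : Fin m, V) / w 0 :=
        div_le_div_of_nonneg_right (sum_sum_le_sum_of_pairwise_disjoint hdisj hV_nonneg) hw0.le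
    _ = m * V / w 0 := by simp

end EnvyGraph

/-- For a WEF-able allocation of m items, every path in the weighted envy graph
costs at most m·V/w₁, and the total minimal subsidy ∑ wᵢ·ℓᵢ is at most
(W/w₁ − 1)·m·V. -/
theorem path_cost_and_total_subsidy_bound {n m : ℕ}
    (w : Fin (n + 1) → ℝ) (hw : ∀ i, 0 < w i) (hmono : Monotone w)
    (val : Fin (n + 1) → Fin m → ℝ) (h0 : ∀ i o, 0 ≤ val i o)
    (V : ℝ) (hV : ∀ i o, val i o ≤ V)
    (A : Fin (n + 1) → Finset (Fin m))
    (hdisj : ∀ i j, i ≠ j → Disjoint (A i) (A j))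
    (v : Fin (n + 1) → Fin (n + 1) → ℝ)
    (hv : ∀ i j, v i j = ∑ o ∈ A j, val i o)
    (hcyc : ∀ c : List (Fin (n + 1)), c ≠ [] → cycleCost (envyCost v w) c ≤ 0)
    (ℓ : Fin (n + 1) → ℝ)
    (hℓ : ∀ i, IsGreatest (pathCostsFrom (envyCost v w) i) (ℓ i)) :
    (∀ p : List (Fin (n + 1)), p.Nodup → pathCost (envyCost v w) p ≤ m * V / w 0) ∧
    ∑ i, w i * ℓ i ≤ ((∑ i, w i) / w 0 - 1) * (m * V) := by
  have hpath : ∀ p : List (Fin (n + 1)), p.Nodup → pathCost (envyCost v w) p ≤ m * V / w 0 :=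
    fun p hp => pathCost_envyCost_le (hw 0) hmono h0 hV hdisj hv hp
  refine ⟨hpath, ?_⟩
  have hℓ_le : ∀ i, ℓ i ≤ m * V / w 0 := fun i => by
    obtain ⟨p, -, hp, -, hcost⟩ := (hℓ i).1
    exact hcost ▸ hpath p hp
  have hℓ_nonneg : ∀ i, 0 ≤ ℓ i := fun i =>
    (hℓ i).2 ⟨[i], List.cons_ne_nil _ _, List.nodup_singleton i, rfl, pathCost_singleton _ i⟩
  obtain ⟨i₀, hi₀⟩ := exists_forall_pathCostsFrom_nonpos (envyCost v w) hcyc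
  have hℓi₀ : ℓ i₀ ≤ 0 := hi₀ _ (hℓ i₀).1
  calc ∑ i, w i * ℓ i ≤ (∑ i, w i - w i₀) * (m * V / w 0) :=
        sum_mul_le_sub_mul_of_nonpos (fun i => (hw i).le) hℓ_le hℓi₀
    _ ≤ (∑ i, w i - w 0) * (m * V / w 0) := by
        gcongr
        · exact (hℓ_nonneg i₀).trans (hℓ_le i₀)
        · exact hmono (Fin.zero_le i₀)
    _ = ((∑ i, w i) / w 0 - 1) * (m * V) := by
        rw [div_sub_one (hw 0).ne']
        ring
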